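/- Suppose f : Δ = [a,b] × [c,d] → ℝ (a < b, c < d) is a co-ordinated Godunova–Levin function on Δ, with f_x ∈ L₁[c,d] and f_y ∈ L₁[a,b]. Then (1/16) f((a+b)/2, (c+d)/2) ≤ (1/8)[(1/(b-a)) ∫_a^b f(x, (c+d)/2) dx + (1/(d-c)) ∫_c^d f((a+b)/2, y) dy] ≤ (1/((b-a)(d-c))) ∫_a^b ∫_c^d f(x,y) dy dx. -/

import Mathlib

/-!
Applying the Godunova–Levin inequality with `λ = 1/2` to a point and its reflection through
the midpoint gives `f(mid) ≤ 2 f(x) + 2 f(a + b - x)`. Integrating this over `[a,b]`, where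
the reflection preserves the integral, gives the one-variable Hermite–Hadamard bound
`(b - a) f((a+b)/2) ≤ 4 ∫ f`. Applying it along each coordinate at the centre gives the left
inequality; applying it along one coordinate at every point and integrating over the other
gives the right one.
-/

open MeasureTheory Set

/-- The Godunova–Levin inequality on `s`, without the nonnegativity requirement. -/
def GodunovaLevinOn (s : Set ℝ) (h : ℝ → ℝ) : Prop :=
  ∀ u ∈ s, ∀ v ∈ s, ∀ l : ℝ, 0 < l → l < 1 → h (l * u + (1 - l) * v) ≤ h u / l + h v / (1 - l)

lemma reflect_mem_Icc {a b x : ℝ} (hx : x ∈ Icc a b) : a + b - x ∈ Icc a b :=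
  ⟨by linarith [hx.2], by linarith [hx.1]⟩

lemma GodunovaLevinOn.apply_midpoint_le {a b : ℝ} {h : ℝ → ℝ} (hh : GodunovaLevinOn (Icc a b) h)
    {x : ℝ} (hx : x ∈ Icc a b) : h ((a + b) / 2) ≤ 2 * h x + 2 * h (a + b - x) := by
  calc h ((a + b) / 2) = h (1 / 2 * x + (1 - 1 / 2) * (a + b - x)) := by congr 1; ring
    _ ≤ h x / (1 / 2) + h (a + b - x) / (1 - 1 / 2) :=
      hh x hx _ (reflect_mem_Icc hx) _ (by norm_num) (by norm_num)
    _ = 2 * h x + 2 * h (a + b - x) := by ring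

lemma sub_mul_le_two_mul_integral_of_le_add_reflect {a b m : ℝ} (hab : a ≤ b) {h : ℝ → ℝ}
    (hm : ∀ x ∈ Icc a b, m ≤ h x + h (a + b - x)) (hint : IntervalIntegrable h volume a b) :
    (b - a) * m ≤ 2 * ∫ x in a..b, h x := by
  have hrefl : IntervalIntegrable (fun x => h (a + b - x)) volume a b := by
    simpa using (hint.comp_sub_left (a + b)).symm
  have hrefl_eq : ∫ x in a..b, h (a + b - x) = ∫ x in a..b, h x := by
    rw [intervalIntegral.integral_comp_sub_left h (a + b)]
    norm_num
  have hmono := intervalIntegral.integral_mono_on hab intervalIntegrable_const (hint.add hrefl) hm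
  rw [intervalIntegral.integral_const, intervalIntegral.integral_add hint hrefl, hrefl_eq, smul_eq_mul] at hmono
  linarith

lemma GodunovaLevinOn.sub_mul_le_four_mul_integral {a b : ℝ} (hab : a ≤ b) {h : ℝ → ℝ}
    (hh : GodunovaLevinOn (Icc a b) h) (hint : IntervalIntegrable h volume a b) :
    (b - a) * h ((a + b) / 2) ≤ 4 * ∫ x in a..b, h x := by
  have := sub_mul_le_two_mul_integral_of_le_add_reflect (m := h ((a + b) / 2) / 2) hab
    (fun x hx => by linarith [hh.apply_midpoint_le hx]) hint
  linarith

section Coordinated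

variable {a b c d : ℝ} {f : ℝ × ℝ → ℝ}

lemma sub_mul_integral_midpoint_snd_le (hab : a ≤ b) (hcd : c ≤ d)
    (hfx : ∀ x ∈ Icc a b, GodunovaLevinOn (Icc c d) fun v => f (x, v))
    (hix : ∀ x ∈ Icc a b, IntervalIntegrable (fun v => f (x, v)) volume c d)
    (hiy : IntervalIntegrable (fun u => f (u, (c + d) / 2)) volume a b)
    (hiI : IntervalIntegrable (fun x => ∫ y in c..d, f (x, y)) volume a b) :
    (d - c) * ∫ x in a..b, f (x, (c + d) / 2) ≤ 4 * ∫ x in a..b, ∫ y in c..d, f (x, y) := by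
  have hmono := intervalIntegral.integral_mono_on hab (hiy.const_mul (d - c)) (hiI.const_mul 4)
    fun x hx => (hfx x hx).sub_mul_le_four_mul_integral hcd (hix x hx)
  rwa [intervalIntegral.integral_const_mul, intervalIntegral.integral_const_mul] at hmono

lemma sub_mul_integral_midpoint_fst_le (hab : a ≤ b) (hcd : c ≤ d)
    (hfy : ∀ y ∈ Icc c d, GodunovaLevinOn (Icc a b) fun u => f (u, y))
    (hix : ∀ x ∈ Icc a b, IntervalIntegrable (fun v => f (x, v)) volume c d)
    (hiI : IntervalIntegrable (fun x => ∫ y in c..d, f (x, y)) volume a b) :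
    (b - a) * ∫ y in c..d, f ((a + b) / 2, y) ≤ 4 * ∫ x in a..b, ∫ y in c..d, f (x, y) := by
  have hmid : (a + b) / 2 ∈ Icc a b := ⟨by linarith, by linarith⟩
  have hsection : ∀ x ∈ Icc a b, (∫ y in c..d, f ((a + b) / 2, y)) ≤
      2 * (∫ y in c..d, f (x, y)) + 2 * ∫ y in c..d, f (a + b - x, y) := by
    intro x hx
    have hint₁ := (hix x hx).const_mul 2
    have hint₂ := (hix (a + b - x) (reflect_mem_Icc hx)).const_mul 2
    have hmono := intervalIntegral.integral_mono_on hcd (hix _ hmid) (hint₁.add hint₂)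
      fun y hy => (hfy y hy).apply_midpoint_le hx
    rwa [intervalIntegral.integral_add hint₁ hint₂, intervalIntegral.integral_const_mul, intervalIntegral.integral_const_mul] at hmono
  have := sub_mul_le_two_mul_integral_of_le_add_reflect
    (m := (∫ y in c..d, f ((a + b) / 2, y)) / 2) hab
    (fun x hx => by linarith [hsection x hx]) hiI
  linarith

end Coordinated

theorem coordinated_godunova_levin_hadamard_general
    (a b c d : ℝ) (hab : a < b) (hcd : c < d) (f : ℝ × ℝ → ℝ)
    (hfx : ∀ x ∈ Set.Icc a b, ∀ v₁ ∈ Set.Icc c d, ∀ v₂ ∈ Set.Icc c d,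
      ∀ l : ℝ, 0 < l → l < 1 →
      f (x, l * v₁ + (1 - l) * v₂) ≤ f (x, v₁) / l + f (x, v₂) / (1 - l))
    (hfy : ∀ y ∈ Set.Icc c d, ∀ u₁ ∈ Set.Icc a b, ∀ u₂ ∈ Set.Icc a b,
      ∀ l : ℝ, 0 < l → l < 1 →
      f (l * u₁ + (1 - l) * u₂, y) ≤ f (u₁, y) / l + f (u₂, y) / (1 - l))
    (hix : ∀ x ∈ Set.Icc a b, IntervalIntegrable (fun v => f (x, v)) volume c d)
    (hiy : ∀ y ∈ Set.Icc c d, IntervalIntegrable (fun u => f (u, y)) volume a b)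
    (hiI : IntervalIntegrable (fun x => ∫ y in c..d, f (x, y)) volume a b) :
    (1 / 16) * f ((a + b) / 2, (c + d) / 2) ≤
      (1 / 8) * ((1 / (b - a)) * (∫ x in a..b, f (x, (c + d) / 2)) +
        (1 / (d - c)) * ∫ y in c..d, f ((a + b) / 2, y)) ∧
    (1 / 8) * ((1 / (b - a)) * (∫ x in a..b, f (x, (c + d) / 2)) +
        (1 / (d - c)) * ∫ y in c..d, f ((a + b) / 2, y)) ≤
      (1 / ((b - a) * (d - c))) * ∫ x in a..b, ∫ y in c..d, f (x, y) := by
  have hba : 0 < b - a := by linarith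
  have hdc : 0 < d - c := by linarith
  have hmx : (a + b) / 2 ∈ Icc a b := ⟨by linarith, by linarith⟩
  have hmy : (c + d) / 2 ∈ Icc c d := ⟨by linarith, by linarith⟩
  have hA := GodunovaLevinOn.sub_mul_le_four_mul_integral hab.le
    (h := fun u => f (u, (c + d) / 2)) (hfy _ hmy) (hiy _ hmy)
  have hB := GodunovaLevinOn.sub_mul_le_four_mul_integral hcd.le
    (h := fun v => f ((a + b) / 2, v)) (hfx _ hmx) (hix _ hmx)
  have hIA := sub_mul_integral_midpoint_snd_le hab.le hcd.le hfx hix (hiy _ hmy) hiI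
  have hIB := sub_mul_integral_midpoint_fst_le hab.le hcd.le hfy hix hiI
  set M := f ((a + b) / 2, (c + d) / 2)
  set A := ∫ x in a..b, f (x, (c + d) / 2)
  set B := ∫ y in c..d, f ((a + b) / 2, y)
  set I := ∫ x in a..b, ∫ y in c..d, f (x, y)
  constructor
  · have hA' : M / 4 ≤ 1 / (b - a) * A := by rw [one_div_mul_eq_div, le_div_iff₀ hba]; linarith
    have hB' : M / 4 ≤ 1 / (d - c) * B := by rw [one_div_mul_eq_div, le_div_iff₀ hdc]; linarith
    linarith
  · have hA' : 1 / (b - a) * A ≤ 4 * (1 / ((b - a) * (d - c)) * I) := by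
      rw [one_div_mul_eq_div, one_div_mul_eq_div, div_le_iff₀ hba]
      field_simp
      linarith
    have hB' : 1 / (d - c) * B ≤ 4 * (1 / ((b - a) * (d - c)) * I) := by
      rw [one_div_mul_eq_div, one_div_mul_eq_div, div_le_iff₀ hdc]
      field_simp
      linarith
    linarith

/-- Hadamard-type inequalities for co-ordinated Godunova–Levin functions on
`Δ = [a,b] × [c,d]`, with the partial mappings `f_x ∈ L₁[c,d]`,
`f_y ∈ L₁[a,b]` (and the double integral assumed to exist). -/
theorem coordinated_godunova_levin_hadamard
    (a b c d : ℝ) (hab : a < b) (hcd : c < d) (f : ℝ × ℝ → ℝ)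
    (hf0 : ∀ p ∈ Set.Icc a b ×ˢ Set.Icc c d, 0 ≤ f p)
    (hfx : ∀ x ∈ Set.Icc a b, ∀ v₁ ∈ Set.Icc c d, ∀ v₂ ∈ Set.Icc c d,
      ∀ l : ℝ, 0 < l → l < 1 →
      f (x, l * v₁ + (1 - l) * v₂) ≤ f (x, v₁) / l + f (x, v₂) / (1 - l))
    (hfy : ∀ y ∈ Set.Icc c d, ∀ u₁ ∈ Set.Icc a b, ∀ u₂ ∈ Set.Icc a b,
      ∀ l : ℝ, 0 < l → l < 1 →
      f (l * u₁ + (1 - l) * u₂, y) ≤ f (u₁, y) / l + f (u₂, y) / (1 - l))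
    (hix : ∀ x ∈ Set.Icc a b, IntervalIntegrable (fun v => f (x, v)) volume c d)
    (hiy : ∀ y ∈ Set.Icc c d, IntervalIntegrable (fun u => f (u, y)) volume a b)
    (hiI : IntervalIntegrable (fun x => ∫ y in c..d, f (x, y)) volume a b) :
    (1 / 16) * f ((a + b) / 2, (c + d) / 2) ≤
      (1 / 8) * ((1 / (b - a)) * (∫ x in a..b, f (x, (c + d) / 2)) +
        (1 / (d - c)) * ∫ y in c..d, f ((a + b) / 2, y)) ∧
    (1 / 8) * ((1 / (b - a)) * (∫ x in a..b, f (x, (c + d) / 2)) +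
        (1 / (d - c)) * ∫ y in c..d, f ((a + b) / 2, y)) ≤
      (1 / ((b - a) * (d - c))) * ∫ x in a..b, ∫ y in c..d, f (x, y) :=
  coordinated_godunova_levin_hadamard_general a b c d hab hcd f hfx hfy hix hiy hiI
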